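/- For natural numbers A ≥ 1, N ≥ 1 and M, the number M(A, N, M, N) of strings of length N over {0, …, A−1} with entry sum M whose cyclic-shift orbit has size exactly N (proper cycles) satisfies M(A, N, M, N) = ∑_{n ∈ D(A,N,M)} μ(N/n) · |S(A, n, M·n/N)|, where the sum runs over all n with n | N and N | M·n, and μ is the Möbius function. -/

import Mathlib

/-- The cyclic shift operator: `(shift a) i = a (i - 1 mod N)`. -/
def shift {A N : ℕ} (a : Fin N → Fin A) : Fin N → Fin A :=
  fun i => a ⟨((i : ℕ) + (N - 1)) % N, Nat.mod_lt _ i.pos⟩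

/-- The orbit of a string under iterated cyclic shifts. -/
def orbit {A N : ℕ} (a : Fin N → Fin A) : Set (Fin N → Fin A) :=
  {b | ∃ k : ℕ, shift^[k] a = b}

/-- The order of the cycle generated by `a`: the size of its shift orbit. -/
noncomputable def orbitSize {A N : ℕ} (a : Fin N → Fin A) : ℕ :=
  (orbit a).ncard

/-- The sum of the entries of a string. -/
def strSum {A N : ℕ} (a : Fin N → Fin A) : ℕ := ∑ i, (a i : ℕ)

/-- `|S(A,N,M)|`: the number of strings of length `N` over `{0,…,A-1}` with sum `M`. -/
noncomputable def Scard (A N M : ℕ) : ℕ :=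
  Set.ncard {a : Fin N → Fin A | strSum a = M}

/-- `M(A,N,M,n)`: the number of strings of length `N` over `{0,…,A-1}` with sum `M`
whose orbit has size exactly `n`. -/
noncomputable def Mcount (A N M n : ℕ) : ℕ :=
  Set.ncard {a : Fin N → Fin A | strSum a = M ∧ orbitSize a = n}

/-- `N(A,N,M,n)`: the number of cycles (shift orbits) of size exactly `n` among strings
of length `N` over `{0,…,A-1}` with sum `M`. -/
noncomputable def Ncount (A N M n : ℕ) : ℕ :=
  Set.ncard {o : Set (Fin N → Fin A) | ∃ a, strSum a = M ∧ orbitSize a = n ∧ o = orbit a}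

/-!
The orbit of a string under the shift has the size of its minimal period, so summing
`M(A, N, M, d)` over `d ∣ n` counts the strings fixed by `shift^[n]`. For `n ∣ N` these are the
`N / n`-fold repetitions of strings of length `n`, whose sum gets multiplied by `N / n`; there are
`|S(A, n, M n / N)|` of them when `N ∣ M n` and none otherwise. Möbius inversion finishes.
-/

open Function Finset Fin.NatCast Fin.CommRing

namespace Function

variable {α : Type*} {f : α → α}

theorem ncard_range_iterate_eq_minimalPeriod {x : α} (hx : x ∈ periodicPts f) :
    (Set.range (f^[·] x)).ncard = minimalPeriod f x := by
  have hrange : Set.range (f^[·] x) = (f^[·] x) '' Set.Iio (minimalPeriod f x) := by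
    refine subset_antisymm ?_ (Set.image_subset_range _ _)
    rintro _ ⟨k, rfl⟩
    exact ⟨k % minimalPeriod f x, Nat.mod_lt _ (minimalPeriod_pos_of_mem_periodicPts hx),
      iterate_mod_minimalPeriod_eq⟩
  rw [hrange, iterate_injOn_Iio_minimalPeriod.ncard_image, ← coe_Iio,
    Set.ncard_coe_finset, Nat.card_Iio]

theorem ncard_isPeriodicPt_eq_sum_divisors [Finite α] (p : α → Prop) {n : ℕ} (hn : 0 < n) :
    {x | p x ∧ IsPeriodicPt f n x}.ncard =
      ∑ d ∈ n.divisors, {x | p x ∧ minimalPeriod f x = d}.ncard := by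
  classical
  have := Fintype.ofFinite α
  simp only [Set.ncard_eq_toFinset_card', Set.toFinset_ofPred]
  rw [card_eq_sum_card_fiberwise (f := minimalPeriod f) (t := n.divisors)]
  · refine sum_congr rfl fun d hd => congrArg card ?_
    rw [filter_filter]
    refine filter_congr fun x _ => and_congr_left fun hx => ?_
    rw [isPeriodicPt_iff_minimalPeriod_dvd, hx, and_iff_left (Nat.dvd_of_mem_divisors hd)]
  · intro x hx
    simp only [coe_filter, Set.mem_ofPred_eq] at hx
    exact Nat.mem_divisors.2 ⟨hx.2.2.minimalPeriod_dvd, hn.ne'⟩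

end Function

theorem Fin.natCast_val_natCast {n N : ℕ} [NeZero n] [NeZero N] (h : n ∣ N) (x : ℕ) :
    (((x : Fin N) : ℕ) : Fin n) = x := by
  ext
  simp [Fin.val_natCast, Nat.mod_mod_of_dvd _ h]

theorem Nat.div_mul_eq_iff_dvd_and_eq {N n s M : ℕ} (hn : n ∣ N) (hN : 0 < N) :
    N / n * s = M ↔ N ∣ M * n ∧ s = M * n / N := by
  have hn0 : 0 < n := Nat.pos_of_dvd_of_pos hn hN
  rw [← Nat.mul_left_inj hn0.ne', mul_right_comm, Nat.div_mul_cancel hn]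
  constructor
  · intro h
    exact ⟨⟨s, h.symm⟩, by rw [← h, Nat.mul_div_cancel_left _ hN]⟩
  · rintro ⟨⟨t, ht⟩, rfl⟩
    rw [ht, Nat.mul_div_cancel_left _ hN]

section Shift

variable {A N : ℕ} [NeZero N]

theorem shift_apply (a : Fin N → Fin A) (i : Fin N) : shift a i = a (i - 1) := by
  show a _ = _
  congr 1
  rw [eq_sub_iff_add_eq]
  ext
  simp [Fin.val_add, add_assoc, Nat.sub_add_cancel NeZero.one_le, Nat.mod_eq_of_lt i.isLt]

theorem iterate_shift_apply (a : Fin N → Fin A) (k : ℕ) (i : Fin N) :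
    shift^[k] a i = a (i - k) := by
  induction k generalizing i with
  | zero => simp
  | succ k ih =>
    rw [iterate_succ_apply', shift_apply, ih]
    congr 1
    push_cast
    ring

theorem isPeriodicPt_shift_iff {a : Fin N → Fin A} {n : ℕ} :
    IsPeriodicPt shift n a ↔ ∀ i, a (i + n) = a i := by
  refine ⟨fun h i => ?_, fun h => funext fun i => ?_⟩
  · simpa [iterate_shift_apply] using (congrFun h (i + n)).symm
  · simpa [iterate_shift_apply] using (h (i - n)).symm

theorem isPeriodicPt_shift_length (a : Fin N → Fin A) : IsPeriodicPt shift N a :=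
  isPeriodicPt_shift_iff.2 fun i => by simp

theorem orbitSize_eq_minimalPeriod (a : Fin N → Fin A) : orbitSize a = minimalPeriod shift a :=
  ncard_range_iterate_eq_minimalPeriod <|
    mk_mem_periodicPts (Nat.pos_of_neZero N) (isPeriodicPt_shift_length a)

end Shift

noncomputable def periodicCount (A N M n : ℕ) : ℕ :=
  {a : Fin N → Fin A | strSum a = M ∧ IsPeriodicPt shift n a}.ncard

section PeriodicExtension

variable {A N n : ℕ} [NeZero n]

def periodicExtension (N : ℕ) (b : Fin n → Fin A) : Fin N → Fin A :=
  fun i => b (i : ℕ)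

def restrictToPrefix [NeZero N] (n : ℕ) (a : Fin N → Fin A) : Fin n → Fin A :=
  fun j => a (j : ℕ)

theorem strSum_periodicExtension (h : n ∣ N) (b : Fin n → Fin A) :
    strSum (periodicExtension N b) = N / n * strSum b := by
  let e : Fin (N / n) × Fin n ≃ Fin N := finProdFinEquiv.trans (finCongr (Nat.div_mul_cancel h))
  have he : ∀ x, ((e x : ℕ) : Fin n) = x.2 := fun x => by
    simp [e, finProdFinEquiv, Fin.cast_val_eq_self]
  rw [strSum, ← e.sum_comp, Fintype.sum_prod_type]
  simp [periodicExtension, he, strSum]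

variable [NeZero N]

theorem leftInverse_restrictToPrefix_periodicExtension (h : n ∣ N) :
    LeftInverse (restrictToPrefix (A := A) n) (periodicExtension N) := fun b =>
  funext fun j => by
    rw [restrictToPrefix, periodicExtension, Fin.natCast_val_natCast h, Fin.cast_val_eq_self]

theorem periodicExtension_restrictToPrefix {a : Fin N → Fin A} (ha : IsPeriodicPt shift n a) :
    periodicExtension N (restrictToPrefix n a) = a := by
  funext i
  have hmul := isPeriodicPt_shift_iff.1 (ha.mul_const ((i : ℕ) / n)) (((i : ℕ) % n : ℕ) : Fin N)
  rw [← Nat.cast_add, Nat.mod_add_div, Fin.cast_val_eq_self] at hmul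
  simp [periodicExtension, restrictToPrefix, Fin.val_natCast, hmul]

theorem isPeriodicPt_periodicExtension (h : n ∣ N) (b : Fin n → Fin A) :
    IsPeriodicPt shift n (periodicExtension N b) := by
  refine isPeriodicPt_shift_iff.2 fun i => ?_
  have : i + n = ((i + n : ℕ) : Fin N) := by simp
  simp only [periodicExtension, this, Fin.natCast_val_natCast h]
  simp

theorem periodicCount_eq (h : n ∣ N) (M : ℕ) :
    periodicCount A N M n = if N ∣ M * n then Scard A n (M * n / N) else 0 := by
  have himage : {a : Fin N → Fin A | strSum a = M ∧ IsPeriodicPt shift n a} =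
      periodicExtension N '' {b : Fin n → Fin A | N / n * strSum b = M} := by
    ext a
    constructor
    · rintro ⟨hsum, hper⟩
      refine ⟨restrictToPrefix n a, ?_, periodicExtension_restrictToPrefix hper⟩
      rw [Set.mem_ofPred_eq, ← strSum_periodicExtension h, periodicExtension_restrictToPrefix hper,
        hsum]
    · rintro ⟨b, hb, rfl⟩
      exact ⟨(strSum_periodicExtension h b).trans hb, isPeriodicPt_periodicExtension h b⟩
  rw [periodicCount, himage, Set.ncard_image_of_injective _
    (leftInverse_restrictToPrefix_periodicExtension h).injective]
  simp_rw [Nat.div_mul_eq_iff_dvd_and_eq h (Nat.pos_of_neZero N)]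
  split_ifs with hdvd <;> simp [hdvd, Scard]

end PeriodicExtension

theorem sum_divisors_Mcount (A N M : ℕ) [NeZero N] {n : ℕ} (hn : 0 < n) :
    ∑ d ∈ n.divisors, Mcount A N M d = periodicCount A N M n := by
  simp only [Mcount, periodicCount, orbitSize_eq_minimalPeriod]
  exact (ncard_isPeriodicPt_eq_sum_divisors _ hn).symm

theorem Mcount_self_eq_sum_moebius (A N M : ℕ) [NeZero N] :
    (Mcount A N M N : ℤ) =
      ∑ d ∈ N.divisors, ArithmeticFunction.moebius (N / d) * (periodicCount A N M d : ℤ) := by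
  have hinv := ArithmeticFunction.sum_eq_iff_sum_mul_moebius_eq
    (f := fun d => (Mcount A N M d : ℤ)) (g := fun n => (periodicCount A N M n : ℤ)) |>.1
    (fun n hn => by exact_mod_cast sum_divisors_Mcount A N M hn) N (Nat.pos_of_neZero N)
  rw [← hinv, ← Nat.sum_divisorsAntidiagonal'
    (fun x y => ArithmeticFunction.moebius x * (periodicCount A N M y : ℤ))]
  simp only [Int.cast_id]

theorem stmt_11_general (A N M : ℕ) (hN : 1 ≤ N) :
    (Mcount A N M N : ℤ) =
      ∑ n ∈ N.divisors.filter (fun n => N ∣ M * n),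
        ArithmeticFunction.moebius (N / n) * (Scard A n (M * n / N) : ℤ) := by
  have : NeZero N := ⟨Nat.one_le_iff_ne_zero.1 hN⟩
  rw [Mcount_self_eq_sum_moebius, sum_filter]
  refine sum_congr rfl fun d hd => ?_
  have : NeZero d := ⟨(Nat.pos_of_mem_divisors hd).ne'⟩
  rw [periodicCount_eq (Nat.dvd_of_mem_divisors hd)]
  split_ifs <;> simp

/-- `M(A,N,M,N) = ∑_{n ∈ D(A,N,M)} μ(N/n)·|S(A,n,M·n/N)|`: the number of strings of length
`N ≥ 1` over `{0,…,A-1}` (`A ≥ 1`) with sum `M` and orbit of size exactly `N` (proper cycles)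
is given by Möbius inversion over `D(A,N,M) = {n : n ∣ N and N ∣ M·n}`. -/
theorem stmt_11 (A N M : ℕ) (hA : 1 ≤ A) (hN : 1 ≤ N) :
    (Mcount A N M N : ℤ) =
      ∑ n ∈ N.divisors.filter (fun n => N ∣ M * n),
        ArithmeticFunction.moebius (N / n) * (Scard A n (M * n / N) : ℤ) :=
  stmt_11_general A N M hN
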